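/- (Deterministic form of Theorem 2.1(b).) If γ > 2, then there exists N₀ such that for all N ≥ N₀, every γ-minimizer j* at N satisfies j* ≤ k. -/

import Mathlib

/-!
Each bulk component beyond the `k` spikes lowers the fit term of `GAIC` by
`N ℓ_i(N)² / (2σ²) ≈ 2N`, while it raises the penalty by `γN` up to an `O(1)` correction.
For `γ > 2` the score of any `j > k` therefore exceeds that of `k` by a quantity growing
like `(γ - 2)(j - k) N`, so eventually no `j > k` can be a minimizer.
-/

open Filter Topology

/-- For `σ > 0`, `ψ_σ(x) = x + σ²/x`. -/
noncomputable def psi (σ x : ℝ) : ℝ := x + σ ^ 2 / x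

/-- The score `GAIC^γ_j(N) = (N/(2σ²)) Σ_{i=j+1}^{q} ℓ_i(N)² + γ(Nj − j(j−1)/2)`. -/
noncomputable def GAIC (σ : ℝ) (q : ℕ) (ℓ : ℕ → ℕ → ℝ) (γ : ℝ) (j N : ℕ) : ℝ :=
  ((N : ℝ) / (2 * σ ^ 2)) * ∑ i ∈ Finset.Icc (j + 1) q, (ℓ i N) ^ 2
    + γ * ((N : ℝ) * (j : ℝ) - (j : ℝ) * ((j : ℝ) - 1) / 2)

theorem eventually_forall_minimizer_le {s : ℕ → ℕ → ℝ} {k q : ℕ} (hkq : k ≤ q)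
    (hs : ∀ j, k < j → j ≤ q → Tendsto (fun N => s j N - s k N) atTop atTop) :
    ∃ N₀ : ℕ, ∀ N ≥ N₀, ∀ jstar : ℕ, jstar ≤ q →
      (∀ j : ℕ, j ≤ q → s jstar N ≤ s j N) → jstar ≤ k := by
  have hpos : ∀ᶠ N in atTop, ∀ j ∈ Finset.Ioc k q, 0 < s j N - s k N := by
    rw [eventually_all_finset]
    intro j hj
    rw [Finset.mem_Ioc] at hj
    exact (hs j hj.1 hj.2).eventually_gt_atTop 0
  obtain ⟨N₀, hN₀⟩ := eventually_atTop.mp hpos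
  refine ⟨N₀, fun N hN jstar hjq hmin => ?_⟩
  by_contra! hkj
  have := hN₀ N hN jstar (Finset.mem_Ioc.mpr ⟨hkj, hjq⟩)
  linarith [hmin k hkq]

theorem tendsto_sum_Ioc_sq {ℓ : ℕ → ℕ → ℝ} {c : ℝ} {k j : ℕ} (hkj : k ≤ j)
    (hℓ : ∀ i ∈ Finset.Ioc k j, Tendsto (fun N => ℓ i N) atTop (𝓝 c)) :
    Tendsto (fun N => ∑ i ∈ Finset.Ioc k j, ℓ i N ^ 2) atTop
      (𝓝 (((j : ℝ) - k) * c ^ 2)) := by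
  have hsum : ∑ _i ∈ Finset.Ioc k j, c ^ 2 = ((j : ℝ) - k) * c ^ 2 := by
    rw [Finset.sum_const, Nat.card_Ioc, nsmul_eq_mul, Nat.cast_sub hkj]
  rw [← hsum]
  exact tendsto_finsetSum _ fun i hi => (hℓ i hi).pow 2

theorem GAIC_sub_GAIC {σ γ : ℝ} {q k j : ℕ} {ℓ : ℕ → ℕ → ℝ} (hkj : k ≤ j) (hjq : j ≤ q)
    (N : ℕ) :
    GAIC σ q ℓ γ j N - GAIC σ q ℓ γ k N =
      N * (γ * ((j : ℝ) - k) - (∑ i ∈ Finset.Ioc k j, ℓ i N ^ 2) / (2 * σ ^ 2))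
        - γ * ((j : ℝ) * (j - 1) - k * (k - 1)) / 2 := by
  have hsplit : ∑ i ∈ Finset.Icc (k + 1) q, ℓ i N ^ 2
      = ∑ i ∈ Finset.Ioc k j, ℓ i N ^ 2 + ∑ i ∈ Finset.Icc (j + 1) q, ℓ i N ^ 2 := by
    rw [Finset.Icc_add_one_left_eq_Ioc, Finset.Icc_add_one_left_eq_Ioc,
      Finset.sum_Ioc_consecutive _ hkj hjq]
  rw [GAIC, GAIC, hsplit]
  ring

theorem tendsto_GAIC_sub_GAIC_atTop {σ γ : ℝ} (hσ : σ ≠ 0) (hγ : 2 < γ) {q k j : ℕ}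
    {ℓ : ℕ → ℕ → ℝ} (hkj : k < j) (hjq : j ≤ q)
    (hbulk : ∀ i ∈ Finset.Ioc k j, Tendsto (fun N => ℓ i N) atTop (𝓝 (2 * σ))) :
    Tendsto (fun N => GAIC σ q ℓ γ j N - GAIC σ q ℓ γ k N) atTop atTop := by
  have hjk : (0 : ℝ) < j - k := sub_pos.mpr (by exact_mod_cast hkj)
  have hslope : Tendsto
      (fun N => γ * ((j : ℝ) - k) - (∑ i ∈ Finset.Ioc k j, ℓ i N ^ 2) / (2 * σ ^ 2)) atTop
      (𝓝 ((γ - 2) * ((j : ℝ) - k))) := by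
    have hlim := tendsto_const_nhds (x := γ * ((j : ℝ) - k)) |>.sub
      ((tendsto_sum_Ioc_sq hkj.le hbulk).div_const (2 * σ ^ 2))
    convert hlim using 2
    field_simp
  simp_rw [GAIC_sub_GAIC hkj.le hjq, sub_eq_add_neg _ (γ * _ / 2)]
  exact tendsto_atTop_add_const_right _ _ <|
    tendsto_natCast_atTop_atTop.atTop_mul_pos (mul_pos (by linarith) hjk) hslope

theorem gaic_no_overestimation_general
    (σ : ℝ) (hσ : 0 < σ) (q k : ℕ) (hkq : k ≤ q)
    (ℓ : ℕ → ℕ → ℝ)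
    (hbulk : ∀ i : ℕ, k < i → i ≤ q →
      Tendsto (fun N : ℕ => ℓ i N) atTop (nhds (2 * σ)))
    (γ : ℝ) (hγ : 2 < γ) :
    ∃ N₀ : ℕ, ∀ N ≥ N₀, ∀ jstar : ℕ, jstar ≤ q →
      (∀ j : ℕ, j ≤ q → GAIC σ q ℓ γ jstar N ≤ GAIC σ q ℓ γ j N) → jstar ≤ k :=
  eventually_forall_minimizer_le hkq fun _ hkj hjq =>
    tendsto_GAIC_sub_GAIC_atTop hσ.ne' hγ hkj hjq fun i hi =>
      hbulk i (Finset.mem_Ioc.mp hi).1 ((Finset.mem_Ioc.mp hi).2.trans hjq)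

/-- Deterministic form of Theorem 2.1(b): if `γ > 2`, then eventually every
`γ`-minimizer `j*` satisfies `j* ≤ k`. -/
theorem gaic_no_overestimation
    (σ : ℝ) (hσ : 0 < σ) (q k : ℕ) (hq : 1 ≤ q) (hkq : k ≤ q)
    (lam : ℕ → ℝ)
    (hlam_anti : ∀ i j : ℕ, 1 ≤ i → i ≤ j → j ≤ k → lam j ≤ lam i)
    (hlam_gt : ∀ i : ℕ, 1 ≤ i → i ≤ k → σ < lam i)
    (ℓ : ℕ → ℕ → ℝ)
    (hℓ_anti : ∀ N i j : ℕ, 1 ≤ i → i ≤ j → j ≤ q → ℓ j N ≤ ℓ i N)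
    (hspike : ∀ i : ℕ, 1 ≤ i → i ≤ k →
      Tendsto (fun N : ℕ => ℓ i N) atTop (nhds (psi σ (lam i))))
    (hbulk : ∀ i : ℕ, k < i → i ≤ q →
      Tendsto (fun N : ℕ => ℓ i N) atTop (nhds (2 * σ)))
    (γ : ℝ) (hγ : 2 < γ) :
    ∃ N₀ : ℕ, ∀ N ≥ N₀, ∀ jstar : ℕ, jstar ≤ q →
      (∀ j : ℕ, j ≤ q → GAIC σ q ℓ γ jstar N ≤ GAIC σ q ℓ γ j N) → jstar ≤ k :=
  gaic_no_overestimation_general σ hσ q k hkq ℓ hbulk γ hγ
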